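/- arXiv:1008.3612 — 3 statements merged into one kernel-verified Lean document; each statement's English description precedes it below -/
import Mathlib

section
/- Any conditional distribution P(a,b|x,y) over finite output sets, with finite input sets for x and y, together with any input distribution P(x,y), can be reproduced by a Bell-local correlated-settings model in which the inputs are deterministic functions of the hidden variable: there exist λ, a distribution P(λ), and functions f,g with x = f(λ), y = g(λ), and response functions such that the model reproduces both P(x,y) and P(a,b|x,y). -/
open Finset Real

noncomputable section

variable {A B X Y L : Type*} [Fintype A] [Fintype B] [Fintype X] [Fintype Y] [Fintype L]

/-- marginal P(x,y,λ) of a joint distribution P(a,b,x,y,λ) -/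
def mXYL (P : A → B → X → Y → L → ℝ) (x : X) (y : Y) (l : L) : ℝ :=
  ∑ a, ∑ b, P a b x y l

/-- marginal P(x,y) -/
def mXY (P : A → B → X → Y → L → ℝ) (x : X) (y : Y) : ℝ := ∑ l, mXYL P x y l

/-- marginal P(λ) -/
def mL (P : A → B → X → Y → L → ℝ) (l : L) : ℝ := ∑ x, ∑ y, mXYL P x y l

/-- marginal P(x,λ) -/
def mXL (P : A → B → X → Y → L → ℝ) (x : X) (l : L) : ℝ := ∑ y, mXYL P x y l

/-- marginal P(y,λ) -/
def mYL (P : A → B → X → Y → L → ℝ) (y : Y) (l : L) : ℝ := ∑ x, mXYL P x y l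

/-- marginal P(a,b,x,y) -/
def mABXY (P : A → B → X → Y → L → ℝ) (a : A) (b : B) (x : X) (y : Y) : ℝ :=
  ∑ l, P a b x y l

/-- marginal P(a,x,λ) -/
def mAXL (P : A → B → X → Y → L → ℝ) (a : A) (x : X) (l : L) : ℝ :=
  ∑ b, ∑ y, P a b x y l

/-- marginal P(b,y,λ) -/
def mBYL (P : A → B → X → Y → L → ℝ) (b : B) (y : Y) (l : L) : ℝ :=
  ∑ a, ∑ x, P a b x y l

/-- conditional P(a|x,λ) -/
def cA (P : A → B → X → Y → L → ℝ) (a : A) (x : X) (l : L) : ℝ :=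
  mAXL P a x l / mXL P x l

/-- conditional P(b|y,λ) -/
def cB (P : A → B → X → Y → L → ℝ) (b : B) (y : Y) (l : L) : ℝ :=
  mBYL P b y l / mYL P y l

/-- Bell locality: P(a,b|x,y,λ) = P(a|x,λ)·P(b|y,λ) whenever P(x,y,λ) > 0 -/
def BellLocal (P : A → B → X → Y → L → ℝ) : Prop :=
  ∀ a b x y l, 0 < mXYL P x y l →
    P a b x y l / mXYL P x y l = cA P a x l * cB P b y l

/-- the joint is a probability distribution -/
def IsDist (P : A → B → X → Y → L → ℝ) : Prop :=
  (∀ a b x y l, 0 ≤ P a b x y l) ∧ ∑ a, ∑ b, ∑ x, ∑ y, ∑ l, P a b x y l = 1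

/-- Shannon entropy (in bits) of a finitely supported distribution -/
def ent {I : Type*} [Fintype I] (q : I → ℝ) : ℝ := -∑ i, q i * Real.logb 2 (q i)

/-- mutual information I(x,y : λ) of a correlated-settings model -/
def miInputsLambda (P : A → B → X → Y → L → ℝ) : ℝ :=
  ent (fun xy : X × Y => mXY P xy.1 xy.2) + ent (mL P)
    - ent (fun q : (X × Y) × L => mXYL P q.1.1 q.1.2 q.2)

end


noncomputable section Aux

variable {A B X Y L : Type*} [Fintype A] [Fintype B] [Fintype X] [Fintype Y] [Fintype L]

set_option linter.unusedSectionVars false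

open Classical

def aPlam (Pc : A → B → X → Y → ℝ) (Pin : X → Y → ℝ) (e : L ≃ A × B × X × Y) (l : L) : ℝ :=
  Pin (e l).2.2.1 (e l).2.2.2 * Pc (e l).1 (e l).2.1 (e l).2.2.1 (e l).2.2.2

noncomputable def aQA (e : L ≃ A × B × X × Y) (a : A) (_ : X) (l : L) : ℝ :=
  if a = (e l).1 then 1 else 0

noncomputable def aQB (e : L ≃ A × B × X × Y) (b : B) (_ : Y) (l : L) : ℝ :=
  if b = (e l).2.1 then 1 else 0

noncomputable def aP (Pc : A → B → X → Y → ℝ) (Pin : X → Y → ℝ) (e : L ≃ A × B × X × Y) :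
    A → B → X → Y → L → ℝ := fun a b x y l =>
  if x = (e l).2.2.1 ∧ y = (e l).2.2.2 then aPlam Pc Pin e l * (aQA e a x l * aQB e b y l)
  else 0

variable (Pc : A → B → X → Y → ℝ) (Pin : X → Y → ℝ) (e : L ≃ A × B × X × Y)

lemma sum_aQA (x : X) (l : L) : ∑ a, aQA e a x l = 1 := by simp [aQA]

lemma sum_aQB (y : Y) (l : L) : ∑ b, aQB e b y l = 1 := by simp [aQB]

lemma sum4 (F : A → B → X → Y → ℝ) :
    ∑ a, ∑ b, ∑ x, ∑ y, F a b x y = ∑ x, ∑ y, ∑ a, ∑ b, F a b x y := by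
  calc ∑ a, ∑ b, ∑ x, ∑ y, F a b x y
      = ∑ a, ∑ x, ∑ b, ∑ y, F a b x y :=
        Finset.sum_congr rfl fun a _ => Finset.sum_comm
    _ = ∑ x, ∑ a, ∑ b, ∑ y, F a b x y := Finset.sum_comm
    _ = ∑ x, ∑ a, ∑ y, ∑ b, F a b x y :=
        Finset.sum_congr rfl fun x _ => Finset.sum_congr rfl fun a _ => Finset.sum_comm
    _ = ∑ x, ∑ y, ∑ a, ∑ b, F a b x y :=
        Finset.sum_congr rfl fun x _ => Finset.sum_comm

lemma sum_sum_mul (c : ℝ) (f : A → ℝ) (g : B → ℝ) :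
    ∑ a, ∑ b, c * (f a * g b) = c * ((∑ a, f a) * (∑ b, g b)) := by
  simp only [← Finset.mul_sum, ← Finset.sum_mul]

lemma aP_eq (a : A) (b : B) (x : X) (y : Y) (l : L) :
    aP Pc Pin e a b x y l = if e l = (a, b, x, y) then Pin x y * Pc a b x y else 0 := by
  rcases h : e l with ⟨a0, b0, x0, y0⟩
  simp only [aP, aPlam, aQA, aQB, h, Prod.mk.injEq]
  by_cases hx : x = x0 <;> by_cases hy : y = y0 <;>
    by_cases ha : a = a0 <;> by_cases hb : b = b0 <;>
      simp_all [eq_comm]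

lemma mABXY_aP (a : A) (b : B) (x : X) (y : Y) :
    mABXY (aP Pc Pin e) a b x y = Pin x y * Pc a b x y := by
  unfold mABXY
  simp only [aP_eq]
  rw [Fintype.sum_bijective e e.bijective _
    (fun q : A × B × X × Y => if q = (a, b, x, y) then Pin x y * Pc a b x y else 0)
    (fun l => rfl)]
  simp

lemma mXYL_aP (x : X) (y : Y) (l : L) :
    mXYL (aP Pc Pin e) x y l =
      if x = (e l).2.2.1 ∧ y = (e l).2.2.2 then aPlam Pc Pin e l else 0 := by
  unfold mXYL aP
  by_cases h : x = (e l).2.2.1 ∧ y = (e l).2.2.2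
  · simp only [h, and_self, eq_self_iff_true, if_true]
    rw [sum_sum_mul, sum_aQA, sum_aQB]
    simp
  · simp [h]

lemma mXL_aP (x : X) (l : L) :
    mXL (aP Pc Pin e) x l = if x = (e l).2.2.1 then aPlam Pc Pin e l else 0 := by
  unfold mXL
  simp only [mXYL_aP]
  by_cases h : x = (e l).2.2.1 <;> simp [h, Finset.sum_ite_eq']

lemma mYL_aP (y : Y) (l : L) :
    mYL (aP Pc Pin e) y l = if y = (e l).2.2.2 then aPlam Pc Pin e l else 0 := by
  unfold mYL
  simp only [mXYL_aP]
  by_cases h : y = (e l).2.2.2 <;> simp [h, Finset.sum_ite_eq']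

lemma mAXL_aP (a : A) (x : X) (l : L) :
    mAXL (aP Pc Pin e) a x l =
      if x = (e l).2.2.1 then aPlam Pc Pin e l * aQA e a x l else 0 := by
  unfold mAXL aP
  by_cases h : x = (e l).2.2.1
  · subst h
    simp [Finset.sum_ite_eq', ← Finset.mul_sum, ← Finset.sum_mul, sum_aQB]
  · simp [h]

lemma mBYL_aP (b : B) (y : Y) (l : L) :
    mBYL (aP Pc Pin e) b y l =
      if y = (e l).2.2.2 then aPlam Pc Pin e l * aQB e b y l else 0 := by
  unfold mBYL aP
  by_cases h : y = (e l).2.2.2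
  · subst h
    simp [Finset.sum_ite_eq', ← Finset.mul_sum, ← Finset.sum_mul, sum_aQA]
  · simp [h]

lemma bellLocal_aP : BellLocal (aP Pc Pin e) := by
  intro a b x y l hpos
  rw [mXYL_aP] at hpos
  by_cases h : x = (e l).2.2.1 ∧ y = (e l).2.2.2
  · obtain ⟨hx, hy⟩ := h
    subst hx; subst hy
    have hne : aPlam Pc Pin e l ≠ 0 := by
      simp only [and_self, if_true] at hpos
      exact ne_of_gt hpos
    unfold cA cB
    rw [mXYL_aP, mAXL_aP, mXL_aP, mBYL_aP, mYL_aP]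
    have hnum : aP Pc Pin e a b (e l).2.2.1 (e l).2.2.2 l =
        aPlam Pc Pin e l * (aQA e a (e l).2.2.1 l * aQB e b (e l).2.2.2 l) := by
      simp [aP]
    rw [hnum]
    simp only [and_self, if_true]
    field_simp
  · simp [h] at hpos

lemma sumL_aP (a : A) (b : B) (x : X) (y : Y) :
    ∑ l, aP Pc Pin e a b x y l = Pin x y * Pc a b x y :=
  mABXY_aP Pc Pin e a b x y

lemma mXY_aP (hc : ∀ x y, ∑ a, ∑ b, Pc a b x y = 1) (x : X) (y : Y) :
    mXY (aP Pc Pin e) x y = Pin x y := by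
  unfold mXY
  rw [Fintype.sum_bijective e e.bijective _
    (fun p : A × B × X × Y =>
      if x = p.2.2.1 ∧ y = p.2.2.2 then
        Pin p.2.2.1 p.2.2.2 * Pc p.1 p.2.1 p.2.2.1 p.2.2.2 else 0)
    (fun l => by rw [mXYL_aP]; rfl)]
  simp only [Fintype.sum_prod_type, ite_and, Finset.sum_ite_irrel, Finset.sum_const_zero,
    Finset.sum_ite_eq, Finset.mem_univ, if_true, ← Finset.mul_sum]
  rw [hc x y, mul_one]

end Aux

/-- any conditional distribution `Pc(a,b|x,y)` together with any
input distribution `Pin(x,y)` can be reproduced by a Bell-local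
correlated-settings model in which the inputs are deterministic functions of the
hidden variable: there exist a finite hidden-variable set L, a distribution Plam,
functions f, g with x = f(λ), y = g(λ), and response functions qA(a|x,λ),
qB(b|y,λ), such that the resulting model reproduces both Pin and Pc. -/
theorem stmt2 {A B X Y : Type*} [Fintype A] [Fintype B] [Fintype X] [Fintype Y]
    [DecidableEq X] [DecidableEq Y]
    (Pc : A → B → X → Y → ℝ) (Pin : X → Y → ℝ)
    (hPc : ∀ x y, (∀ a b, 0 ≤ Pc a b x y) ∧ ∑ a, ∑ b, Pc a b x y = 1)
    (hPin : (∀ x y, 0 ≤ Pin x y) ∧ ∑ x, ∑ y, Pin x y = 1) :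
    ∃ (L : Type) (_ : Fintype L) (Plam : L → ℝ) (f : L → X) (g : L → Y)
      (qA : A → X → L → ℝ) (qB : B → Y → L → ℝ),
      (∀ l, 0 ≤ Plam l) ∧ (∑ l, Plam l = 1) ∧
      (∀ x l, (∀ a, 0 ≤ qA a x l) ∧ ∑ a, qA a x l = 1) ∧
      (∀ y l, (∀ b, 0 ≤ qB b y l) ∧ ∑ b, qB b y l = 1) ∧
      -- the correlated-settings model with inputs determined by λ
      (let P : A → B → X → Y → L → ℝ := fun a b x y l =>
          if x = f l ∧ y = g l then Plam l * (qA a x l * qB b y l) else 0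
       IsDist P ∧ BellLocal P ∧
       (∀ x y, mXY P x y = Pin x y) ∧
       (∀ a b x y, 0 < Pin x y → mABXY P a b x y / Pin x y = Pc a b x y)) := by
    classical
  have hc : ∀ x y, ∑ a, ∑ b, Pc a b x y = 1 := fun x y => (hPc x y).2
  let e : Fin (Fintype.card (A × B × X × Y)) ≃ A × B × X × Y :=
    (Fintype.equivFin (A × B × X × Y)).symm
  refine ⟨Fin (Fintype.card (A × B × X × Y)), inferInstance, aPlam Pc Pin e,
    fun l => (e l).2.2.1, fun l => (e l).2.2.2, aQA e, aQB e, ?_, ?_, ?_, ?_, ?_⟩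
  · intro l
    exact mul_nonneg (hPin.1 _ _) ((hPc _ _).1 _ _)
  · have hsum : ∑ l, aPlam Pc Pin e l =
        ∑ p : A × B × X × Y, Pin p.2.2.1 p.2.2.2 * Pc p.1 p.2.1 p.2.2.1 p.2.2.2 :=
      Fintype.sum_bijective e e.bijective _ _ (fun l => rfl)
    rw [hsum]
    simp only [Fintype.sum_prod_type]
    rw [sum4, ← hPin.2]
    refine Finset.sum_congr rfl fun x _ => Finset.sum_congr rfl fun y _ => ?_
    simp only [← Finset.mul_sum]
    rw [hc x y, mul_one]
  · intro x l
    exact ⟨fun a => by unfold aQA; positivity, sum_aQA e x l⟩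
  · intro y l
    exact ⟨fun b => by unfold aQB; positivity, sum_aQB e y l⟩
  · dsimp only
    have hP : (fun (a : A) (b : B) (x : X) (y : Y) l =>
        if x = (e l).2.2.1 ∧ y = (e l).2.2.2 then
          aPlam Pc Pin e l * (aQA e a x l * aQB e b y l) else 0) = aP Pc Pin e := by
      funext a b x y l
      simp only [aP]
      split_ifs <;> rfl
    rw [hP]
    refine ⟨⟨fun a b x y l => ?_, ?_⟩, bellLocal_aP Pc Pin e, mXY_aP Pc Pin e hc, ?_⟩
    · rw [aP_eq]
      split
      · exact mul_nonneg (hPin.1 _ _) ((hPc _ _).1 _ _)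
      · exact le_refl _
    · simp only [sumL_aP]
      rw [sum4, ← hPin.2]
      refine Finset.sum_congr rfl fun x _ => Finset.sum_congr rfl fun y _ => ?_
      simp only [← Finset.mul_sum]
      rw [hc x y, mul_one]
    · intro a b x y hpos
      rw [mABXY_aP, mul_comm, mul_div_assoc, div_self (ne_of_gt hpos), mul_one]
end

section
/- Given a fixed input distribution P(x,y) and a classical communication model reproducing correlations P(a,b|x,y), with shared randomness μ independent of (x,y) and total conversation m = f(x,y,μ) a deterministic function of inputs and shared randomness, there exists a Bell-local correlated-settings model (with hidden variable λ = (μ,m)) reproducing the same input distribution and correlations, and satisfying I(x,y : λ) ≤ H(m), where H(m) is the entropy of the conversation's distribution induced by P(x,y). -/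
open Finset Real

lemma subadd {U M : Type*} [Fintype U] [Fintype M] (p : U × M → ℝ)
    (pU : U → ℝ) (pM : M → ℝ)
    (hpU : ∀ u, pU u = ∑ m, p (u, m)) (hpM : ∀ m, pM m = ∑ u, p (u, m))
    (hp : ∀ z, 0 ≤ p z) (hsum : ∑ z, p z = 1) :
    ent p ≤ ent pU + ent pM := by
  have hpU0 : ∀ u, 0 ≤ pU u := fun u => (hpU u) ▸ Finset.sum_nonneg fun m _ => hp _
  have hpM0 : ∀ m, 0 ≤ pM m := fun m => (hpM m) ▸ Finset.sum_nonneg fun u _ => hp _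
  have hU1 : ∑ u, pU u = 1 := by
    rw [← hsum, Fintype.sum_prod_type]; exact Finset.sum_congr rfl fun u _ => hpU u
  have hM1 : ∑ m, pM m = 1 := by
    rw [← hsum, Fintype.sum_prod_type, Finset.sum_comm]
    exact Finset.sum_congr rfl fun m _ => hpM m
  have eU : ∑ u, pU u * Real.logb 2 (pU u) = ∑ z : U × M, p z * Real.logb 2 (pU z.1) := by
    rw [Fintype.sum_prod_type]
    simp only []
    refine Finset.sum_congr rfl fun u _ => ?_
    rw [hpU u]
    exact Finset.sum_mul Finset.univ (fun m => p (u, m)) _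
  have eM : ∑ m, pM m * Real.logb 2 (pM m) = ∑ z : U × M, p z * Real.logb 2 (pM z.2) := by
    rw [Fintype.sum_prod_type, Finset.sum_comm]
    simp only []
    refine Finset.sum_congr rfl fun m _ => ?_
    rw [hpM m]
    exact Finset.sum_mul Finset.univ (fun u => p (u, m)) _
  have hl2 : (0:ℝ) < Real.log 2 := Real.log_pos one_lt_two
  have key : ∀ z : U × M,
      p z * Real.logb 2 (pU z.1) + p z * Real.logb 2 (pM z.2) - p z * Real.logb 2 (p z)
        ≤ (pU z.1 * pM z.2 - p z) / Real.log 2 := by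
    intro z
    rcases eq_or_lt_of_le (hp z) with h0 | hpos
    · rw [← h0]
      simp only [zero_mul, add_zero, sub_zero, zero_add]
      exact div_nonneg (mul_nonneg (hpU0 _) (hpM0 _)) hl2.le
    · have hU : 0 < pU z.1 := lt_of_lt_of_le hpos (by
        rw [hpU]
        exact Finset.single_le_sum (fun m _ => hp (z.1, m)) (Finset.mem_univ z.2))
      have hM : 0 < pM z.2 := lt_of_lt_of_le hpos (by
        rw [hpM]
        exact Finset.single_le_sum (fun u _ => hp (u, z.2)) (Finset.mem_univ z.1))
      have hlog : Real.log (pU z.1 * pM z.2 / p z) ≤ pU z.1 * pM z.2 / p z - 1 :=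
        Real.log_le_sub_one_of_pos (by positivity)
      rw [div_sub_one (ne_of_gt hpos)] at hlog
      have h2 := mul_le_mul_of_nonneg_left hlog (le_of_lt hpos)
      rw [Real.log_div (by positivity) (ne_of_gt hpos),
        Real.log_mul (ne_of_gt hU) (ne_of_gt hM)] at h2
      calc p z * Real.logb 2 (pU z.1) + p z * Real.logb 2 (pM z.2) - p z * Real.logb 2 (p z)
          = p z * (Real.log (pU z.1) + Real.log (pM z.2) - Real.log (p z)) / Real.log 2 := by
            rw [Real.logb, Real.logb, Real.logb]; ring
        _ ≤ (p z * ((pU z.1 * pM z.2 - p z) / p z)) / Real.log 2 := by gcongr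
        _ = (pU z.1 * pM z.2 - p z) / Real.log 2 := by
            rw [mul_div_cancel₀ _ (ne_of_gt hpos)]
  have hprod : ∑ z : U × M, pU z.1 * pM z.2 = 1 := by
    rw [Fintype.sum_prod_type]
    simp only [← Finset.mul_sum, hM1, mul_one, hU1]
  have hsum2 : ∑ z : U × M, (pU z.1 * pM z.2 - p z) / Real.log 2 = 0 := by
    rw [← Finset.sum_div, Finset.sum_sub_distrib, hprod, hsum]
    norm_num
  have hle := Finset.sum_le_sum (fun z (_ : z ∈ Finset.univ) => key z)
  rw [hsum2] at hle
  simp only [Finset.sum_sub_distrib, Finset.sum_add_distrib] at hle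
  unfold ent
  rw [eU, eM]
  linarith

/-- given a fixed input distribution `Pin(x,y)` and a classical
communication model (shared randomness μ with distribution `Pmu`, independent of
the inputs; conversation `m = f x y μ`; outputs `a = g x μ m`, `b = h y μ m`)
which reproduces the correlations `Pc(a,b|x,y)`, there exists a Bell-local
correlated-settings model with hidden variable λ = (μ,m) reproducing the same
input distribution and correlations, and satisfying `I(x,y:λ) ≤ H(m)`, where
`H(m)` is the entropy of the conversation's distribution induced by `Pin`. -/
theorem stmt3 {A B X Y U M : Type*} [Fintype A] [Fintype B] [Fintype X] [Fintype Y]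
    [Fintype U] [Fintype M] [DecidableEq A] [DecidableEq B] [DecidableEq M]
    (Pin : X → Y → ℝ) (Pmu : U → ℝ)
    (f : X → Y → U → M) (g : X → U → M → A) (h : Y → U → M → B)
    (Pc : A → B → X → Y → ℝ)
    (hPin : (∀ x y, 0 ≤ Pin x y) ∧ ∑ x, ∑ y, Pin x y = 1)
    (hPmu : (∀ u, 0 ≤ Pmu u) ∧ ∑ u, Pmu u = 1)
    (hrep : ∀ a b x y,
      (∑ u, if g x u (f x y u) = a ∧ h y u (f x y u) = b then Pmu u else 0)
        = Pc a b x y) :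
    ∃ P : A → B → X → Y → (U × M) → ℝ,
      IsDist P ∧ BellLocal P ∧
      (∀ x y, mXY P x y = Pin x y) ∧
      (∀ a b x y, 0 < Pin x y → mABXY P a b x y / Pin x y = Pc a b x y) ∧
      miInputsLambda P ≤
        ent (fun m : M => ∑ x, ∑ y, ∑ u, if f x y u = m then Pin x y * Pmu u else 0) := by
  classical
  set P : A → B → X → Y → (U × M) → ℝ := fun a b x y um =>
    if f x y um.1 = um.2 ∧ g x um.1 um.2 = a ∧ h y um.1 um.2 = b
      then Pin x y * Pmu um.1 else 0 with hPdef
  have h0 : ∀ a b x y l, 0 ≤ P a b x y l := by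
    intro a b x y l
    rw [hPdef]
    dsimp only
    split
    · exact mul_nonneg (hPin.1 _ _) (hPmu.1 _)
    · exact le_refl 0
  -- key marginal: P(x,y,λ)
  have hXYL : ∀ x y (l : U × M),
      mXYL P x y l = if f x y l.1 = l.2 then Pin x y * Pmu l.1 else 0 := by
    intro x y ⟨u, m⟩
    unfold mXYL
    rw [hPdef]
    simp [ite_and, Finset.sum_ite_eq]
  have hXYL0 : ∀ x y (l : U × M), 0 ≤ mXYL P x y l := by
    intro x y l
    exact Finset.sum_nonneg fun a _ => Finset.sum_nonneg fun b _ => h0 a b x y l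
  -- P(x,y) = Pin
  have hXY : ∀ x y, mXY P x y = Pin x y := by
    intro x y
    unfold mXY
    rw [Fintype.sum_prod_type]
    have : ∀ u : U, ∑ m : M, mXYL P x y (u, m) = Pin x y * Pmu u := by
      intro u
      rw [Finset.sum_congr rfl fun m _ => hXYL x y (u, m)]
      simp [Finset.sum_ite_eq]
    rw [Finset.sum_congr rfl fun u _ => this u, ← Finset.mul_sum, hPmu.2, mul_one]
  -- P(a,b,x,y) = Pin * Pc
  have hABXY : ∀ a b x y, mABXY P a b x y = Pin x y * Pc a b x y := by
    intro a b x y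
    unfold mABXY
    rw [Fintype.sum_prod_type, ← hrep a b x y, Finset.mul_sum]
    refine Finset.sum_congr rfl fun u _ => ?_
    rw [hPdef]
    simp [ite_and, Finset.sum_ite_eq, mul_ite]
  -- total sum is 1
  have htot : ∑ a, ∑ b, ∑ x, ∑ y, ∑ l : U × M, P a b x y l = 1 := by
    have e1 : ∀ a : A, ∑ b, ∑ x, ∑ y, ∑ l : U × M, P a b x y l
        = ∑ x, ∑ y, ∑ l : U × M, ∑ b, P a b x y l := by
      intro a
      rw [Finset.sum_comm]
      refine Finset.sum_congr rfl fun x _ => ?_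
      rw [Finset.sum_comm]
      refine Finset.sum_congr rfl fun y _ => ?_
      rw [Finset.sum_comm]
    rw [Finset.sum_congr rfl fun a _ => e1 a]
    have e2 : ∑ a, ∑ x, ∑ y, ∑ l : U × M, ∑ b, P a b x y l
        = ∑ x, ∑ y, ∑ l : U × M, ∑ a, ∑ b, P a b x y l := by
      rw [Finset.sum_comm]
      refine Finset.sum_congr rfl fun x _ => ?_
      rw [Finset.sum_comm]
      refine Finset.sum_congr rfl fun y _ => ?_
      rw [Finset.sum_comm]
    rw [e2]
    have : ∀ x y, ∑ l : U × M, ∑ a, ∑ b, P a b x y l = Pin x y := by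
      intro x y
      rw [← hXY x y]
      rfl
    rw [Finset.sum_congr rfl fun x _ => Finset.sum_congr rfl fun y _ => this x y, hPin.2]
  -- Bell locality
  have hBell : BellLocal P := by
    intro a b x y l hpos
    obtain ⟨u, m⟩ := l
    have hf : f x y u = m := by
      by_contra hne
      rw [hXYL x y (u, m), if_neg hne] at hpos
      exact lt_irrefl 0 hpos
    have hc : mXYL P x y (u, m) = Pin x y * Pmu u := by
      rw [hXYL x y (u, m), if_pos hf]
    have hcpos : 0 < Pin x y * Pmu u := hc ▸ hpos
    -- mXL positive
    have hXLpos : 0 < mXL P x (u, m) := by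
      refine lt_of_lt_of_le hpos ?_
      unfold mXL
      exact Finset.single_le_sum (fun y' _ => hXYL0 x y' (u, m)) (Finset.mem_univ y)
    have hYLpos : 0 < mYL P y (u, m) := by
      refine lt_of_lt_of_le hpos ?_
      unfold mYL
      exact Finset.single_le_sum (fun x' _ => hXYL0 x' y (u, m)) (Finset.mem_univ x)
    have hAXL : ∀ a', mAXL P a' x (u, m)
        = if g x u m = a' then mXL P x (u, m) else 0 := by
      intro a'
      unfold mAXL
      rw [Finset.sum_comm]
      by_cases hg : g x u m = a'
      · rw [if_pos hg]
        unfold mXL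
        refine Finset.sum_congr rfl fun y' _ => ?_
        rw [hXYL x y' (u, m)]
        rw [hPdef]
        simp [ite_and, hg, Finset.sum_ite_eq]
      · rw [if_neg hg]
        refine Finset.sum_eq_zero fun y' _ => Finset.sum_eq_zero fun b' _ => ?_
        rw [hPdef]
        dsimp only
        rw [if_neg]
        tauto
    have hBYL : ∀ b', mBYL P b' y (u, m)
        = if h y u m = b' then mYL P y (u, m) else 0 := by
      intro b'
      unfold mBYL
      rw [Finset.sum_comm]
      by_cases hh : h y u m = b'
      · rw [if_pos hh]
        unfold mYL
        refine Finset.sum_congr rfl fun x' _ => ?_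
        rw [hXYL x' y (u, m)]
        rw [hPdef]
        simp [ite_and, hh, Finset.sum_ite_eq]
      · rw [if_neg hh]
        refine Finset.sum_eq_zero fun x' _ => Finset.sum_eq_zero fun a' _ => ?_
        rw [hPdef]
        dsimp only
        rw [if_neg]
        tauto
    have hcA : cA P a x (u, m) = if g x u m = a then 1 else 0 := by
      unfold cA
      rw [hAXL a]
      split_ifs
      · exact div_self (ne_of_gt hXLpos)
      · exact zero_div _
    have hcB : cB P b y (u, m) = if h y u m = b then 1 else 0 := by
      unfold cB
      rw [hBYL b]
      split_ifs
      · exact div_self (ne_of_gt hYLpos)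
      · exact zero_div _
    rw [hcA, hcB, hc, hPdef]
    dsimp only
    by_cases hg : g x u m = a <;> by_cases hh : h y u m = b <;>
      simp [hf, hg, hh, div_self (ne_of_gt hcpos)]
  -- entropy bookkeeping
  have hentXY : ent (fun xy : X × Y => mXY P xy.1 xy.2)
      = ent (fun xy : X × Y => Pin xy.1 xy.2) := by
    unfold ent
    congr 1
    refine Finset.sum_congr rfl fun xy _ => ?_
    simp only [hXY]
  have hentXY' : ent (fun xy : X × Y => Pin xy.1 xy.2)
      = -∑ x, ∑ y, Pin x y * Real.logb 2 (Pin x y) := by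
    unfold ent
    rw [Fintype.sum_prod_type]
  -- joint entropy equals H(xy) + H(mu)
  have hentJ : ent (fun q : (X × Y) × (U × M) => mXYL P q.1.1 q.1.2 q.2)
      = ent (fun xy : X × Y => Pin xy.1 xy.2) + ent Pmu := by
    unfold ent
    rw [Fintype.sum_prod_type]
    have step1 : ∀ xy : X × Y, ∑ l : U × M,
        mXYL P xy.1 xy.2 l * Real.logb 2 (mXYL P xy.1 xy.2 l)
        = ∑ u, (Pin xy.1 xy.2 * Pmu u) * Real.logb 2 (Pin xy.1 xy.2 * Pmu u) := by
      intro xy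
      rw [Fintype.sum_prod_type]
      refine Finset.sum_congr rfl fun u _ => ?_
      have e : ∀ m, mXYL P xy.1 xy.2 (u, m) * Real.logb 2 (mXYL P xy.1 xy.2 (u, m))
          = if f xy.1 xy.2 u = m
              then (Pin xy.1 xy.2 * Pmu u) * Real.logb 2 (Pin xy.1 xy.2 * Pmu u)
              else 0 := by
        intro m
        rw [hXYL xy.1 xy.2 (u, m)]
        split_ifs <;> simp
      rw [Finset.sum_congr rfl fun m _ => e m]
      simp [Finset.sum_ite_eq]
    rw [Finset.sum_congr rfl fun xy _ => step1 xy]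
    have split : ∀ (p q : ℝ), 0 ≤ p → 0 ≤ q →
        (p * q) * Real.logb 2 (p * q)
          = q * (p * Real.logb 2 p) + p * (q * Real.logb 2 q) := by
      intro p q hp hq
      rcases eq_or_lt_of_le hp with h1 | h1
      · rw [← h1]; simp
      rcases eq_or_lt_of_le hq with h2 | h2
      · rw [← h2]; simp
      rw [Real.logb, Real.logb, Real.logb, Real.log_mul (ne_of_gt h1) (ne_of_gt h2)]
      ring
    have step2 : ∀ xy : X × Y,
        ∑ u, (Pin xy.1 xy.2 * Pmu u) * Real.logb 2 (Pin xy.1 xy.2 * Pmu u)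
        = Pin xy.1 xy.2 * Real.logb 2 (Pin xy.1 xy.2)
            + Pin xy.1 xy.2 * ∑ u, Pmu u * Real.logb 2 (Pmu u) := by
      intro xy
      rw [Finset.sum_congr rfl fun u _ => split (Pin xy.1 xy.2) (Pmu u)
        (hPin.1 _ _) (hPmu.1 u)]
      rw [Finset.sum_add_distrib, ← Finset.sum_mul, hPmu.2, one_mul, ← Finset.mul_sum]
    rw [Finset.sum_congr rfl fun xy _ => step2 xy]
    rw [Finset.sum_add_distrib, ← Finset.sum_mul]
    have : ∑ xy : X × Y, Pin xy.1 xy.2 = 1 := by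
      rw [Fintype.sum_prod_type]; exact hPin.2
    rw [this, one_mul]
    ring
  -- marginals of mL P
  have hmLval : ∀ u m, mL P (u, m)
      = ∑ x, ∑ y, (if f x y u = m then Pin x y * Pmu u else 0) := by
    intro u m
    unfold mL
    exact Finset.sum_congr rfl fun x _ => Finset.sum_congr rfl fun y _ => hXYL x y (u, m)
  have hmargU : ∀ u, Pmu u = ∑ m, mL P (u, m) := by
    intro u
    rw [Finset.sum_congr rfl fun m _ => hmLval u m]
    rw [Finset.sum_comm]
    have hx : ∀ x, ∑ m, ∑ y, (if f x y u = m then Pin x y * Pmu u else 0)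
        = ∑ y, Pin x y * Pmu u := by
      intro x
      rw [Finset.sum_comm]
      refine Finset.sum_congr rfl fun y _ => ?_
      simp [Finset.sum_ite_eq]
    rw [Finset.sum_congr rfl fun x _ => hx x]
    simp only [← Finset.sum_mul]
    rw [hPin.2, one_mul]
  have hmargM : ∀ m, (∑ x, ∑ y, ∑ u, if f x y u = m then Pin x y * Pmu u else 0)
      = ∑ u, mL P (u, m) := by
    intro m
    rw [Finset.sum_congr rfl fun u _ => hmLval u m]
    have e : ∀ x, ∑ y, ∑ u, (if f x y u = m then Pin x y * Pmu u else 0)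
        = ∑ u, ∑ y, (if f x y u = m then Pin x y * Pmu u else 0) := by
      intro x
      exact Finset.sum_comm
    rw [Finset.sum_congr rfl fun x _ => e x]
    exact Finset.sum_comm
  have hL0 : ∀ z : U × M, 0 ≤ mL P z := by
    intro z
    exact Finset.sum_nonneg fun x _ => Finset.sum_nonneg fun y _ => hXYL0 x y z
  have hsumL : ∑ z : U × M, mL P z = 1 := by
    rw [Fintype.sum_prod_type]
    rw [Finset.sum_congr rfl fun u (_ : u ∈ Finset.univ) => (hmargU u).symm]
    exact hPmu.2
  have hsub := subadd (mL P) Pmu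
    (fun m : M => ∑ x, ∑ y, ∑ u, if f x y u = m then Pin x y * Pmu u else 0)
    hmargU (fun m => hmargM m) hL0 hsumL
  refine ⟨P, ⟨h0, htot⟩, hBell, hXY, ?_, ?_⟩
  · intro a b x y hp
    rw [hABXY, mul_comm, mul_div_assoc, div_self (ne_of_gt hp), mul_one]
  · unfold miInputsLambda
    rw [hentXY, hentJ]
    linarith [hsub]
end

section
/- Given an input distribution P(x,y) and a Bell-local detection-efficiency model reproducing correlations P(a,b|x,y) (conditioned on both detectors clicking), the correlated-settings model defined by P_CS(a,b,x,y,λ) = P(x,y)·P_DE(a,b,λ | x,y, D_A, D_B) is a well-defined probability distribution that reproduces both the input distribution P(x,y) and the correlations P(a,b|x,y), and is Bell-local. -/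
/-!
Post-selecting on a double click, the correlated-settings joint is
`Pin(x,y) · Plam(λ) · KA(a,1|x,λ) · KB(b,1|y,λ) / N(x,y)`, where `N(x,y)` is the probability
of a double click. Every joint of the form `c(x,y,λ) · f(a,x,λ) · g(b,y,λ)` with nonnegative
factors is Bell-local: its conditional `P(a|x,λ)` is `f(a,x,λ) / ∑ a', f(a',x,λ)` whatever `c`
is, so the dependence of `λ` on the settings, absorbed in `c`, does not spoil locality.
Dividing by `N` makes the `(x,y)`-marginal equal to `Pin`, and the conditional of `(a,b)`
given `(x,y)` is the post-selected correlation `Pc` by construction.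
-/

open Finset Real

theorem sum_mXY {A B X Y L : Type*} [Fintype A] [Fintype B] [Fintype X] [Fintype Y] [Fintype L]
    (P : A → B → X → Y → L → ℝ) :
    ∑ x, ∑ y, mXY P x y = ∑ a, ∑ b, ∑ x, ∑ y, ∑ l, P a b x y l := by
  simp only [mXY, mXYL, ← Fintype.sum_prod_type']
  exact Fintype.sum_equiv
    ⟨fun p => (p.2.2.2.1, p.2.2.2.2, p.1, p.2.1, p.2.2.1),
     fun q => (q.2.2.1, q.2.2.2.1, q.2.2.2.2, q.1, q.2.1), fun _ => rfl, fun _ => rfl⟩ _ _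
    fun _ => rfl

def factorizedJoint {A B X Y L : Type*}
    (c : X → Y → L → ℝ) (f : A → X → L → ℝ) (g : B → Y → L → ℝ) :
    A → B → X → Y → L → ℝ :=
  fun a b x y l => c x y l * (f a x l * g b y l)

section factorizedJoint

variable {A B X Y L : Type*} (c : X → Y → L → ℝ) (f : A → X → L → ℝ) (g : B → Y → L → ℝ)

theorem mXYL_factorizedJoint [Fintype A] [Fintype B] (x : X) (y : Y) (l : L) :
    mXYL (factorizedJoint c f g) x y l = c x y l * ((∑ a, f a x l) * ∑ b, g b y l) := by
  simp only [mXYL, factorizedJoint, ← mul_sum, sum_mul_sum]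

theorem mAXL_factorizedJoint [Fintype B] [Fintype Y] (a : A) (x : X) (l : L) :
    mAXL (factorizedJoint c f g) a x l = f a x l * ∑ y, c x y l * ∑ b, g b y l := by
  simp only [mAXL, factorizedJoint, mul_sum]
  rw [sum_comm]
  exact sum_congr rfl fun _ _ => sum_congr rfl fun _ _ => by ring

theorem mBYL_factorizedJoint [Fintype A] [Fintype X] (b : B) (y : Y) (l : L) :
    mBYL (factorizedJoint c f g) b y l = g b y l * ∑ x, c x y l * ∑ a, f a x l := by
  simp only [mBYL, factorizedJoint, mul_sum]
  rw [sum_comm]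
  exact sum_congr rfl fun _ _ => sum_congr rfl fun _ _ => by ring

theorem mXL_factorizedJoint [Fintype A] [Fintype B] [Fintype Y] (x : X) (l : L) :
    mXL (factorizedJoint c f g) x l = (∑ a, f a x l) * ∑ y, c x y l * ∑ b, g b y l := by
  rw [mXL, mul_sum]
  simp only [mXYL_factorizedJoint]
  exact sum_congr rfl fun _ _ => by ring

theorem mYL_factorizedJoint [Fintype A] [Fintype B] [Fintype X] (y : Y) (l : L) :
    mYL (factorizedJoint c f g) y l = (∑ b, g b y l) * ∑ x, c x y l * ∑ a, f a x l := by
  rw [mYL, mul_sum]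
  simp only [mXYL_factorizedJoint]
  exact sum_congr rfl fun _ _ => by ring

theorem factorizedJoint_nonneg (hc : ∀ x y l, 0 ≤ c x y l) (hf : ∀ a x l, 0 ≤ f a x l)
    (hg : ∀ b y l, 0 ≤ g b y l) (a : A) (b : B) (x : X) (y : Y) (l : L) :
    0 ≤ factorizedJoint c f g a b x y l :=
  mul_nonneg (hc x y l) (mul_nonneg (hf a x l) (hg b y l))

theorem bellLocal_factorizedJoint [Fintype A] [Fintype B] [Fintype X] [Fintype Y] [Fintype L]
    (hc : ∀ x y l, 0 ≤ c x y l) (hf : ∀ a x l, 0 ≤ f a x l) (hg : ∀ b y l, 0 ≤ g b y l) :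
    BellLocal (factorizedJoint c f g) := by
  intro a b x y l hpos
  have hF : ∀ x l, 0 ≤ ∑ a, f a x l := fun x l => sum_nonneg fun a _ => hf a x l
  have hG : ∀ y l, 0 ≤ ∑ b, g b y l := fun y l => sum_nonneg fun b _ => hg b y l
  rw [mXYL_factorizedJoint] at hpos ⊢
  have hcxy : 0 < c x y l := pos_of_mul_pos_left hpos (mul_nonneg (hF x l) (hG y l))
  have hFG : 0 < (∑ a, f a x l) * ∑ b, g b y l := pos_of_mul_pos_right hpos (hc x y l)
  have hFx : 0 < ∑ a, f a x l := pos_of_mul_pos_left hFG (hG y l)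
  have hGy : 0 < ∑ b, g b y l := pos_of_mul_pos_right hFG (hF x l)
  have hWA : 0 < ∑ y', c x y' l * ∑ b, g b y' l :=
    sum_pos' (fun y' _ => mul_nonneg (hc x y' l) (hG y' l)) ⟨y, mem_univ y, mul_pos hcxy hGy⟩
  have hWB : 0 < ∑ x', c x' y l * ∑ a, f a x' l :=
    sum_pos' (fun x' _ => mul_nonneg (hc x' y l) (hF x' l)) ⟨x, mem_univ x, mul_pos hcxy hFx⟩
  rw [cA, cB, mAXL_factorizedJoint, mXL_factorizedJoint, mBYL_factorizedJoint,
    mYL_factorizedJoint, factorizedJoint]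
  field_simp

end factorizedJoint

/-- given an input distribution `Pin(x,y)` and a Bell-local
detection-efficiency model (hidden variable λ with distribution `Plam`
independent of the inputs, conditional distributions
`K(a,b,D_A,D_B|x,y,λ) = KA(a,D_A|x,λ)·KB(b,D_B|y,λ)`) which reproduces the
correlations `Pc(a,b|x,y) = P_DE(a,b|x,y,D_A=1,D_B=1)`, the correlated-settings
model `P_CS(a,b,x,y,λ) = Pin(x,y)·P_DE(a,b,λ|x,y,D_A=1,D_B=1)` is a well-defined
probability distribution that reproduces both `Pin` and `Pc`, and is
Bell-local. -/
theorem stmt8 {A B X Y L : Type*} [Fintype A] [Fintype B] [Fintype X] [Fintype Y] [Fintype L]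
    (Pin : X → Y → ℝ) (Plam : L → ℝ)
    (K : A → B → Bool → Bool → X → Y → L → ℝ)
    (KA : A → Bool → X → L → ℝ) (KB : B → Bool → Y → L → ℝ)
    (Pc : A → B → X → Y → ℝ)
    (hPin : (∀ x y, 0 ≤ Pin x y) ∧ ∑ x, ∑ y, Pin x y = 1)
    (hPlam : (∀ l, 0 ≤ Plam l) ∧ ∑ l, Plam l = 1)
    (hKA : ∀ x l, (∀ a dA, 0 ≤ KA a dA x l) ∧ ∑ a, ∑ dA, KA a dA x l = 1)
    (hKB : ∀ y l, (∀ b dB, 0 ≤ KB b dB y l) ∧ ∑ b, ∑ dB, KB b dB y l = 1)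
    -- Bell locality of the detection-efficiency model
    (hK : ∀ a b dA dB x y l, K a b dA dB x y l = KA a dA x l * KB b dB y l)
    -- both detectors click with positive probability
    (hD : ∀ x y, 0 < ∑ l, Plam l * ∑ a, ∑ b, K a b true true x y l)
    -- the detection-efficiency model reproduces Pc, conditioned on both clicks
    (hrep : ∀ a b x y, Pc a b x y =
      (∑ l, Plam l * K a b true true x y l)
        / (∑ l, Plam l * ∑ a', ∑ b', K a' b' true true x y l)) :
    -- the derived correlated-settings model
    (let P : A → B → X → Y → L → ℝ := fun a b x y l =>
        Pin x y * (Plam l * K a b true true x y l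
          / (∑ l', Plam l' * ∑ a', ∑ b', K a' b' true true x y l'))
     IsDist P ∧
     (∀ x y, mXY P x y = Pin x y) ∧
     (∀ a b x y, 0 < Pin x y → mABXY P a b x y / Pin x y = Pc a b x y) ∧
     BellLocal P) := by
  intro P
  have hP : P = factorizedJoint
      (fun x y l => Pin x y * Plam l / ∑ l', Plam l' * ∑ a', ∑ b', K a' b' true true x y l')
      (fun a x l => KA a true x l) (fun b y l => KB b true y l) := by
    funext a b x y l
    simp only [P, factorizedJoint, hK a b true true x y l]
    ring
  have hmABXY : ∀ a b x y, mABXY P a b x y = Pin x y * Pc a b x y := by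
    intro a b x y
    simp only [mABXY, P, ← mul_sum, ← sum_div, hrep]
  have hmXY : ∀ x y, mXY P x y = Pin x y := by
    intro x y
    have hNK : ∑ l, Plam l * ((∑ a, KA a true x l) * ∑ b, KB b true y l)
        = ∑ l, Plam l * ∑ a, ∑ b, K a b true true x y l := by
      simp only [hK, sum_mul_sum]
    simp only [mXY, hP, mXYL_factorizedJoint, mul_div_right_comm, mul_assoc, ← mul_sum, hNK]
    field_simp [(hD x y).ne']
  have hc : ∀ x y l, 0 ≤ Pin x y * Plam l / ∑ l', Plam l' * ∑ a', ∑ b', K a' b' true true x y l' :=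
    fun x y l => div_nonneg (mul_nonneg (hPin.1 x y) (hPlam.1 l)) (hD x y).le
  have hfA : ∀ a x l, 0 ≤ KA a true x l := fun a x l => (hKA x l).1 a true
  have hgB : ∀ b y l, 0 ≤ KB b true y l := fun b y l => (hKB y l).1 b true
  refine ⟨⟨?_, ?_⟩, hmXY, fun a b x y hxy => ?_, ?_⟩
  · rw [hP]
    exact factorizedJoint_nonneg _ _ _ hc hfA hgB
  · rw [← sum_mXY]
    simp only [hmXY, hPin.2]
  · rw [hmABXY, mul_div_cancel_left₀ _ hxy.ne']
  · rw [hP]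
    exact bellLocal_factorizedJoint _ _ _ hc hfA hgB
end
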